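/- arXiv:0901.4054 — 2 statements merged into one kernel-verified Lean document; each statement's English description precedes it below -/
import Mathlib

section
/- Every finite two-player zero-sum game has a value: for any real-valued payoff matrix A (m×n), the maximum over mixed strategies x of the minimum over mixed strategies y of xᵀAy equals the minimum over y of the maximum over x of xᵀAy. -/
/-!
The payoff `(x, y) ↦ xᵀAy` is bilinear and the simplices are compact and convex, so Sion's
minimax theorem gives a saddle point `(x₀, y₀)`: `xᵀAy₀ ≤ x₀ᵀAy` for all mixed strategies.
Both the max-min and the min-max are then squeezed onto `x₀ᵀAy₀`.
-/

open Matrix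

theorem LinearMap.exists_isSaddlePointOn {E F : Type*}
    [TopologicalSpace E] [AddCommGroup E] [Module ℝ E] [IsTopologicalAddGroup E]
    [ContinuousSMul ℝ E]
    [TopologicalSpace F] [AddCommGroup F] [Module ℝ F] [IsTopologicalAddGroup F]
    [ContinuousSMul ℝ F]
    {X : Set E} {Y : Set F} (ne_X : X.Nonempty) (cX : Convex ℝ X) (kX : IsCompact X)
    (ne_Y : Y.Nonempty) (cY : Convex ℝ Y) (kY : IsCompact Y)
    (B : E →ₗ[ℝ] F →ₗ[ℝ] ℝ) (hB : ∀ y, Continuous (B.flip y)) (hB' : ∀ x, Continuous (B x)) :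
    ∃ a ∈ X, ∃ b ∈ Y, IsSaddlePointOn X Y (fun x y => B x y) a b :=
  Sion.exists_isSaddlePointOn ne_X cX kX
    (fun y _ => (hB y).lowerSemicontinuous.lowerSemicontinuousOn X)
    (fun y _ => ((B.flip y).convexOn cX).quasiconvexOn) cY ne_Y kY
    (fun x _ => (hB' x).upperSemicontinuous.upperSemicontinuousOn Y)
    (fun x _ => ((B x).concaveOn cY).quasiconcaveOn)

theorem ciSup_ciInf_eq_ciInf_ciSup_of_saddle {α ι κ : Type*} [ConditionallyCompleteLattice α]
    [Nonempty ι] [Nonempty κ] {f : ι → κ → α}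
    (hf : ∀ i, BddBelow (Set.range (f i))) (hf' : ∀ j, BddAbove (Set.range (f · j)))
    {i₀ : ι} {j₀ : κ} (hsaddle : ∀ i j, f i j₀ ≤ f i₀ j) :
    ⨆ i, ⨅ j, f i j = ⨅ j, ⨆ i, f i j := by
  have hinf_bdd : BddAbove (Set.range fun i => ⨅ j, f i j) :=
    ⟨f i₀ j₀, by rintro _ ⟨i, rfl⟩; exact (ciInf_le (hf i) j₀).trans (hsaddle i j₀)⟩
  have hsup_bdd : BddBelow (Set.range fun j => ⨆ i, f i j) :=
    ⟨f i₀ j₀, by rintro _ ⟨j, rfl⟩; exact (hsaddle i₀ j).trans (le_ciSup (hf' j) i₀)⟩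
  refine le_antisymm (ciSup_le fun i => le_ciInf fun j => ?_) ?_
  · exact (ciInf_le (hf i) j).trans (le_ciSup (hf' j) i)
  calc ⨅ j, ⨆ i, f i j ≤ ⨆ i, f i j₀ := ciInf_le hsup_bdd j₀
    _ ≤ ⨅ j, f i₀ j := ciSup_le fun i => le_ciInf fun j => hsaddle i j
    _ ≤ ⨆ i, ⨅ j, f i j := le_ciSup hinf_bdd i₀

theorem Matrix.exists_saddlePoint_dotProduct_mulVec {ι κ : Type*} [Fintype ι] [Fintype κ]
    [Nonempty ι] [Nonempty κ] (A : Matrix ι κ ℝ) :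
    ∃ x ∈ stdSimplex ℝ ι, ∃ y ∈ stdSimplex ℝ κ,
      ∀ x' ∈ stdSimplex ℝ ι, ∀ y' ∈ stdSimplex ℝ κ, x' ⬝ᵥ A *ᵥ y ≤ x ⬝ᵥ A *ᵥ y' := by
  obtain ⟨y, hy, x, hx, hsaddle⟩ := LinearMap.exists_isSaddlePointOn
    (Set.nonempty_coe_sort.mp inferInstance) (convex_stdSimplex ℝ κ) (isCompact_stdSimplex ℝ κ)
    (Set.nonempty_coe_sort.mp inferInstance) (convex_stdSimplex ℝ ι) (isCompact_stdSimplex ℝ ι)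
    ((dotProductBilin ℝ ℝ).flip ∘ₗ A.mulVecLin)
    (fun _ => LinearMap.continuous_of_finiteDimensional _)
    (fun _ => LinearMap.continuous_of_finiteDimensional _)
  exact ⟨x, hx, y, hy, fun x' hx' y' hy' => hsaddle y' hy' x' hx'⟩

theorem stmt0 (m n : Nat) (hm : 0 < m) (hn : 0 < n)
    (A : Matrix (Fin m) (Fin n) Real) :
    (⨆ x : stdSimplex Real (Fin m), ⨅ y : stdSimplex Real (Fin n),
        (x : Fin m → Real) ⬝ᵥ A.mulVec (y : Fin n → Real)) =
    (⨅ y : stdSimplex Real (Fin n), ⨆ x : stdSimplex Real (Fin m),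
        (x : Fin m → Real) ⬝ᵥ A.mulVec (y : Fin n → Real)) := by
  have : Nonempty (Fin m) := Fin.pos_iff_nonempty.mp hm
  have : Nonempty (Fin n) := Fin.pos_iff_nonempty.mp hn
  have hpayoff : Continuous fun p : stdSimplex ℝ (Fin m) × stdSimplex ℝ (Fin n) =>
      (p.1 : Fin m → ℝ) ⬝ᵥ A *ᵥ (p.2 : Fin n → ℝ) := by fun_prop
  obtain ⟨x₀, hx₀, y₀, hy₀, hsaddle⟩ := A.exists_saddlePoint_dotProduct_mulVec
  exact ciSup_ciInf_eq_ciInf_ciSup_of_saddle (i₀ := ⟨x₀, hx₀⟩) (j₀ := ⟨y₀, hy₀⟩)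
    (fun x => (isCompact_range (hpayoff.comp (Continuous.prodMk_right x))).bddBelow)
    (fun y => (isCompact_range (hpayoff.comp (Continuous.prodMk_left y))).bddAbove)
    (fun x y => hsaddle x x.2 y y.2)
end

section
/- A point (x, y) ∈ Δ^m × Δ^n is a fixed point of Nash's improvement map T if and only if (x, y) is a Nash equilibrium of the game with payoff matrices A and B. -/
open Matrix Finset

noncomputable def nashMap {m n : Nat}
    (A B : Matrix (Fin m) (Fin n) Real)
    (p : (Fin m → Real) × (Fin n → Real)) : (Fin m → Real) × (Fin n → Real) :=
  (fun i => (p.1 i + max 0 (A.mulVec p.2 i - p.1 ⬝ᵥ A.mulVec p.2)) /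
      (1 + ∑ k, max 0 (A.mulVec p.2 k - p.1 ⬝ᵥ A.mulVec p.2)),
   fun j => (p.2 j + max 0 (Matrix.vecMul p.1 B j - p.1 ⬝ᵥ B.mulVec p.2)) /
      (1 + ∑ k, max 0 (Matrix.vecMul p.1 B k - p.1 ⬝ᵥ B.mulVec p.2)))

lemma nash_key {N : Nat} (x : Fin N → ℝ) (hx : x ∈ stdSimplex ℝ (Fin N))
    (v : Fin N → ℝ) (u : ℝ) (hu : u = x ⬝ᵥ v) :
    ((fun i => (x i + max 0 (v i - u)) / (1 + ∑ k, max 0 (v k - u))) = x) ↔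
    ∀ x' ∈ stdSimplex ℝ (Fin N), x' ⬝ᵥ v ≤ u := by
  obtain ⟨hx0, hx1⟩ := hx
  have hS0 : (0:ℝ) ≤ ∑ k, max 0 (v k - u) :=
    Finset.sum_nonneg fun k _ => le_max_left _ _
  have hSpos : (0:ℝ) < 1 + ∑ k, max 0 (v k - u) := by linarith
  constructor
  · intro h
    have hci : ∀ i, max 0 (v i - u) = x i * ∑ k, max 0 (v k - u) := by
      intro i
      have := congrFun h i
      field_simp at this
      linarith [this]
    have hvu : ∀ i, v i ≤ u := by
      by_contra hcon
      push_neg at hcon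
      have hSgt : 0 < ∑ k, max 0 (v k - u) := by
        rcases eq_or_lt_of_le hS0 with h0 | h0
        · obtain ⟨i, hi⟩ := hcon
          have hz : max 0 (v i - u) = 0 :=
            (Finset.sum_eq_zero_iff_of_nonneg (fun k _ => le_max_left _ _)).mp h0.symm
              i (Finset.mem_univ i)
          have : v i - u ≤ max 0 (v i - u) := le_max_right _ _
          linarith
        · exact h0
      have hsum0 : ∑ i, x i * (v i - u) = 0 := by
        have : ∑ i, x i * (v i - u) = x ⬝ᵥ v - (∑ i, x i) * u := by
          simp [dotProduct, mul_sub, Finset.sum_sub_distrib, Finset.sum_mul]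
        rw [this, hx1, hu]; ring
      have hterm : ∀ i, 0 ≤ x i * (v i - u) := by
        intro i
        rcases eq_or_lt_of_le (hx0 i) with h0 | h0
        · rw [← h0]; simp
        · have hcpos : 0 < max 0 (v i - u) := by rw [hci i]; positivity
          rcases lt_max_iff.mp hcpos with h' | h'
          · exact absurd h' (lt_irrefl 0)
          · positivity
      obtain ⟨i0, hi0⟩ : ∃ i, 0 < x i := by
        by_contra hno
        push_neg at hno
        have : ∑ i, x i = 0 := le_antisymm (Finset.sum_nonpos fun i _ => hno i)
          (Finset.sum_nonneg fun i _ => hx0 i)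
        rw [hx1] at this; norm_num at this
      have hpos : 0 < x i0 * (v i0 - u) := by
        have hcpos : 0 < max 0 (v i0 - u) := by rw [hci i0]; positivity
        rcases lt_max_iff.mp hcpos with h' | h'
        · exact absurd h' (lt_irrefl 0)
        · positivity
      have : 0 < ∑ i, x i * (v i - u) :=
        Finset.sum_pos' (fun i _ => hterm i) ⟨i0, Finset.mem_univ i0, hpos⟩
      linarith
    intro x' hx'
    obtain ⟨hx'0, hx'1⟩ := hx'
    calc x' ⬝ᵥ v = ∑ i, x' i * v i := rfl
      _ ≤ ∑ i, x' i * u := Finset.sum_le_sum fun i _ =>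
          mul_le_mul_of_nonneg_left (hvu i) (hx'0 i)
      _ = u := by rw [← Finset.sum_mul, hx'1, one_mul]
  · intro h
    have hvu : ∀ i, v i ≤ u := by
      intro i
      have hmem : Pi.single i (1:ℝ) ∈ stdSimplex ℝ (Fin N) := by
        constructor
        · intro j; rcases eq_or_ne j i with rfl | hji
          · simp
          · simp [Pi.single_apply, hji]
        · simp [Finset.sum_pi_single']
      have := h _ hmem
      simpa [dotProduct, Pi.single_apply, Finset.sum_ite_eq'] using this
    have hc0 : ∀ i, max (0:ℝ) (v i - u) = 0 :=
      fun i => max_eq_left (sub_nonpos.mpr (hvu i))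
    funext i
    show (x i + max 0 (v i - u)) / (1 + ∑ k, max 0 (v k - u)) = x i
    rw [Finset.sum_eq_zero (fun k _ => hc0 k), hc0 i]
    simp

theorem stmt15 (m n : Nat)
    (A B : Matrix (Fin m) (Fin n) Real)
    (p : (Fin m → Real) × (Fin n → Real))
    (hp : p ∈ stdSimplex Real (Fin m) ×ˢ stdSimplex Real (Fin n)) :
    nashMap A B p = p ↔
    ((∀ x' ∈ stdSimplex Real (Fin m), x' ⬝ᵥ A.mulVec p.2 ≤ p.1 ⬝ᵥ A.mulVec p.2) ∧
     (∀ y' ∈ stdSimplex Real (Fin n), p.1 ⬝ᵥ B.mulVec y' ≤ p.1 ⬝ᵥ B.mulVec p.2)) := by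
  obtain ⟨hp1, hp2⟩ := hp
  rw [nashMap, Prod.ext_iff]
  have key1 := nash_key p.1 hp1 (A.mulVec p.2) (p.1 ⬝ᵥ A.mulVec p.2) rfl
  have hdot : p.1 ⬝ᵥ B.mulVec p.2 = p.2 ⬝ᵥ Matrix.vecMul p.1 B := by
    rw [Matrix.dotProduct_mulVec, dotProduct_comm]
  have key2 := nash_key p.2 hp2 (Matrix.vecMul p.1 B) (p.1 ⬝ᵥ B.mulVec p.2) hdot
  have e : ∀ y' : Fin n → ℝ, y' ⬝ᵥ Matrix.vecMul p.1 B = p.1 ⬝ᵥ B.mulVec y' := by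
    intro y'
    rw [dotProduct_comm, ← Matrix.dotProduct_mulVec]
  constructor
  · rintro ⟨h1, h2⟩
    refine ⟨key1.mp h1, fun y' hy' => ?_⟩
    have := key2.mp h2 y' hy'
    rwa [e y'] at this
  · rintro ⟨h1, h2⟩
    exact ⟨key1.mpr h1, key2.mpr fun y' hy' => (e y') ▸ h2 y' hy'⟩
end
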